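/- arXiv:2309.08366 — 3 statements merged into one kernel-verified Lean document; each statement's English description precedes it below -/
import Mathlib

section
/- Let Ω be a measurable space equipped with a filtration (F_t)_{t≥0} and let 𝒬 be a nonempty set of probability measures on Ω. Let A¹ and A² be adapted processes whose paths are nondecreasing in t with A¹(0)=A²(0)=0, with A¹ pathwise continuous and sup_{Q∈𝒬} E_Q[sup_{t≥0} A¹(t)] < ∞. Let M be a pathwise continuous adapted process with M(0)=0 such that, for every t ≥ 0, M(t) is integrable with respect to every Q ∈ 𝒬 and M is a supermartingale with respect to (F_t) under every Q ∈ 𝒬. Let Z be a nonnegative adapted process with sup_{Q∈𝒬} E_Q[Z(0)] < ∞ and Z(t) = Z(0) + A¹(t) − A²(t) + M(t) for all t ≥ 0. Then, quasi-surely, sup_{t≥0} A²(t) < ∞, Z(t) converges to a finite limit as t → ∞, and M(t) converges to a finite limit as t → ∞. -/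
open MeasureTheory Filter
open scoped NNReal ENNReal

lemma aux_upcrossings_ge {Ω : Type*} {f : ℕ → Ω → ℝ} {a b : ℝ} (hab : a < b) {ω : Ω}
    {K : ℕ} (s t : ℕ → ℕ) (hs : ∀ i < K, f (s i) ω < a) (ht : ∀ i < K, b < f (t i) ω)
    (hst : ∀ i < K, s i < t i) (hts : ∀ i, i + 1 < K → t i < s (i + 1)) :
    (K : ℝ≥0∞) ≤ upcrossings a b f ω := by
  have claim : ∀ i < K, i + 1 ≤ upcrossingsBefore a b f (t i + 1) ω := by
    intro i
    induction i with
    | zero =>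
      intro h0K
      have h0 := upcrossingsBefore_lt_of_exists_upcrossing (N := 0) hab (Nat.zero_le (s 0))
        (hs 0 h0K) (hst 0 h0K).le (ht 0 h0K)
      simp [upcrossingsBefore_zero] at h0
      omega
    | succ k ih =>
      intro hK
      have h0 := upcrossingsBefore_lt_of_exists_upcrossing (N := t k + 1) hab
        (hts k hK) (hs (k + 1) hK) (hst (k + 1) hK).le (ht (k + 1) hK)
      have := ih (by omega)
      omega
  rcases K with _ | k
  · simp
  calc ((k + 1 : ℕ) : ℝ≥0∞) ≤ (upcrossingsBefore a b f (t k + 1) ω : ℝ≥0∞) := by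
        exact_mod_cast claim k (Nat.lt_succ_self k)
    _ ≤ upcrossings a b f ω := le_iSup (fun N => (upcrossingsBefore a b f N ω : ℝ≥0∞)) _

lemma aux_bridge {Ω : Type*} (G : ℝ≥0 → Ω → ℝ) (ω : Ω)
    (hc : Continuous fun t => G t ω) {p q : ℝ} (hpq : p < q)
    (h1 : ∃ᶠ t in atTop, G t ω < p) (h2 : ∃ᶠ t in atTop, q < G t ω) (K : ℕ) :
    ∃ m₀ : ℕ, ∀ m, m₀ ≤ m →
      (K : ℝ≥0∞) ≤ upcrossings p q (fun (k : ℕ) ω' => G ((k : ℝ≥0) / 2 ^ m) ω') ω := by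
  classical
  rcases Nat.eq_zero_or_pos K with rfl | hK
  · exact ⟨0, fun m _ => by simp⟩
  have hS : ∀ T : ℝ≥0, ∃ x, T ≤ x ∧ G x ω < p := by
    intro T; rcases frequently_atTop.1 h1 T with ⟨x, hx, hx'⟩; exact ⟨x, hx, hx'⟩
  have hB : ∀ T : ℝ≥0, ∃ x, T ≤ x ∧ q < G x ω := by
    intro T; rcases frequently_atTop.1 h2 T with ⟨x, hx, hx'⟩; exact ⟨x, hx, hx'⟩
  set F : ℝ≥0 → ℝ≥0 × ℝ≥0 :=
    fun T => ⟨(hS (T + 1)).choose, (hB ((hS (T + 1)).choose + 1)).choose⟩ with hF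
  have hF1 : ∀ T, T + 1 ≤ (F T).1 := fun T => (hS (T + 1)).choose_spec.1
  have hF2 : ∀ T, G (F T).1 ω < p := fun T => (hS (T + 1)).choose_spec.2
  have hF3 : ∀ T, (F T).1 + 1 ≤ (F T).2 := fun T => (hB _).choose_spec.1
  have hF4 : ∀ T, q < G (F T).2 ω := fun T => (hB _).choose_spec.2
  set seq : ℕ → ℝ≥0 × ℝ≥0 := fun n => Nat.rec (F 0) (fun _ pr => F pr.2) n with hseqdef
  set s : ℕ → ℝ≥0 := fun i => (seq i).1 with hsdef
  set t : ℕ → ℝ≥0 := fun i => (seq i).2 with htdef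
  have hform : ∀ i, ∃ T, seq i = F T := by
    intro i; cases i with
    | zero => exact ⟨0, rfl⟩
    | succ n => exact ⟨(seq n).2, rfl⟩
  have hsp : ∀ i, G (s i) ω < p := by
    intro i; obtain ⟨T, hT⟩ := hform i; rw [hsdef]; simp only [hT]; exact hF2 T
  have hqt : ∀ i, q < G (t i) ω := by
    intro i; obtain ⟨T, hT⟩ := hform i; rw [htdef]; simp only [hT]; exact hF4 T
  have hgap1 : ∀ i, s i + 1 ≤ t i := by
    intro i; obtain ⟨T, hT⟩ := hform i; rw [hsdef, htdef]; simp only [hT]; exact hF3 T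
  have hgap2 : ∀ i, t i + 1 ≤ s (i + 1) := by
    intro i
    have hrec : seq (i + 1) = F (seq i).2 := rfl
    rw [hsdef, htdef]; simp only [hrec]; exact hF1 _
  have hEs : ∀ i, ∃ ε : ℝ, 0 < ε ∧ ∀ x : ℝ≥0, dist x (s i) < ε → G x ω < p := by
    intro i
    have hopen : IsOpen ((fun x => G x ω) ⁻¹' Set.Iio p) := isOpen_Iio.preimage hc
    rcases Metric.isOpen_iff.1 hopen (s i) (hsp i) with ⟨ε, hε, hball⟩
    exact ⟨ε, hε, fun x hx => hball (Metric.mem_ball.2 hx)⟩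
  have hEt : ∀ i, ∃ ε : ℝ, 0 < ε ∧ ∀ x : ℝ≥0, dist x (t i) < ε → q < G x ω := by
    intro i
    have hopen : IsOpen ((fun x => G x ω) ⁻¹' Set.Ioi q) := isOpen_Ioi.preimage hc
    rcases Metric.isOpen_iff.1 hopen (t i) (hqt i) with ⟨ε, hε, hball⟩
    exact ⟨ε, hε, fun x hx => hball (Metric.mem_ball.2 hx)⟩
  choose εs hεs hεs' using hEs
  choose εt hεt hεt' using hEt
  set δ : ℝ := (Finset.range K).inf' (Finset.nonempty_range_iff.2 hK.ne') (fun i => min (εs i) (εt i))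
    with hδdef
  have hδpos : 0 < δ := by
    rw [hδdef, Finset.lt_inf'_iff]
    exact fun i _ => lt_min (hεs i) (hεt i)
  obtain ⟨m₀, hm₀⟩ := exists_pow_lt_of_lt_one (lt_min hδpos one_pos) (by norm_num : (1/2 : ℝ) < 1)
  refine ⟨m₀, fun m hm => ?_⟩
  have hhalf : ((1:ℝ)/2)^m < min δ 1 :=
    lt_of_le_of_lt (pow_le_pow_of_le_one (by norm_num) (by norm_num) hm) hm₀
  set c : ℝ≥0 := 2 ^ m with hcdef
  have hc0 : (0 : ℝ≥0) < c := pow_pos two_pos m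
  have hcinv : ((c⁻¹ : ℝ≥0) : ℝ) = (1/2 : ℝ)^m := by
    rw [hcdef]; push_cast; rw [one_div, inv_pow]
  have hcinv1 : (c⁻¹ : ℝ≥0) < 1 := by
    rw [← NNReal.coe_lt_coe, hcinv]; exact lt_of_lt_of_le hhalf (min_le_right _ _)
  set k : ℕ → ℕ := fun i => ⌈s i * c⌉₊ with hkdef
  set l : ℕ → ℕ := fun i => ⌈t i * c⌉₊ with hldef
  have hgrid : ∀ x : ℝ≥0, x ≤ (⌈x * c⌉₊ : ℝ≥0) / c ∧ (⌈x * c⌉₊ : ℝ≥0) / c ≤ x + c⁻¹ := by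
    intro x
    constructor
    · rw [le_div_iff₀ hc0]; exact Nat.le_ceil _
    · rw [div_le_iff₀ hc0, add_mul, inv_mul_cancel₀ hc0.ne']
      exact (Nat.ceil_lt_add_one (zero_le : (0:ℝ≥0) ≤ x * c)).le
  have hdist : ∀ (x : ℝ≥0) (i : ℕ), i < K →
      dist ((⌈x * c⌉₊ : ℝ≥0) / c) x < min (εs i) (εt i) := by
    intro x i hi
    rw [NNReal.dist_eq, abs_of_nonneg (sub_nonneg.2 (by exact_mod_cast (hgrid x).1))]
    have h2 : ((⌈x * c⌉₊ : ℝ≥0) / c : ℝ≥0) ≤ x + c⁻¹ := (hgrid x).2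
    have h2' : (((⌈x * c⌉₊ : ℝ≥0) / c : ℝ≥0) : ℝ) ≤ (x : ℝ) + ((c⁻¹ : ℝ≥0) : ℝ) := by
      exact_mod_cast h2
    have h3 : (((⌈x * c⌉₊ : ℝ≥0) / c : ℝ≥0) : ℝ) - (x : ℝ) ≤ ((c⁻¹ : ℝ≥0) : ℝ) := by linarith
    refine lt_of_le_of_lt h3 ?_
    rw [hcinv]
    refine lt_of_lt_of_le (lt_of_lt_of_le hhalf (min_le_left _ _)) ?_
    rw [hδdef]
    exact Finset.inf'_le _ (Finset.mem_range.2 hi)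
  refine aux_upcrossings_ge (f := fun n ω' => G ((n : ℝ≥0) / c) ω') hpq k l ?_ ?_ ?_ ?_
  · intro i hi
    exact hεs' i _ (lt_of_lt_of_le (hdist (s i) i hi) (min_le_left _ _))
  · intro i hi
    exact hεt' i _ (lt_of_lt_of_le (hdist (t i) i hi) (min_le_right _ _))
  · intro i _
    have h1' : ((k i : ℝ≥0)) / c < ((l i : ℝ≥0)) / c := by
      calc ((k i : ℝ≥0)) / c ≤ s i + c⁻¹ := (hgrid (s i)).2
        _ < s i + 1 := by exact add_lt_add_right hcinv1 _
        _ ≤ t i := hgap1 i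
        _ ≤ ((l i : ℝ≥0)) / c := (hgrid (t i)).1
    by_contra hnot
    push_neg at hnot
    exact absurd (by gcongr <;> exact_mod_cast hnot : ((l i : ℝ≥0)) / c ≤ ((k i : ℝ≥0)) / c)
      (not_le.2 h1')
  · intro i _
    have h1' : ((l i : ℝ≥0)) / c < ((k (i+1) : ℝ≥0)) / c := by
      calc ((l i : ℝ≥0)) / c ≤ t i + c⁻¹ := (hgrid (t i)).2
        _ < t i + 1 := by exact add_lt_add_right hcinv1 _
        _ ≤ s (i+1) := hgap2 i
        _ ≤ ((k (i+1) : ℝ≥0)) / c := (hgrid (s (i+1))).1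
    by_contra hnot
    push_neg at hnot
    exact absurd (by gcongr <;> exact_mod_cast hnot : ((k (i+1) : ℝ≥0)) / c ≤ ((l i : ℝ≥0)) / c)
      (not_le.2 h1')

/-- **G-semimartingale convergence theorem** (Theorem 3.2), stated in per-measure form:
`𝒬` is a nonempty family of probability measures, `Ê[X] = sup_{Q∈𝒬} E_Q[X]`, and
"quasi-surely" means `Q`-a.s. for every `Q ∈ 𝒬`. -/
theorem g_semimartingale_convergence
    {Ω : Type*} {m : MeasurableSpace Ω} (ℱ : Filtration ℝ≥0 m)
    (𝒬 : Set (Measure Ω)) (h𝒬 : 𝒬.Nonempty)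
    (hprob : ∀ Q ∈ 𝒬, IsProbabilityMeasure Q)
    (A₁ A₂ M Z : ℝ≥0 → Ω → ℝ)
    (hA₁adapted : Adapted ℱ A₁) (hA₂adapted : Adapted ℱ A₂)
    (hMadapted : Adapted ℱ M) (hZadapted : Adapted ℱ Z)
    (hA₁mono : ∀ ω, Monotone fun t => A₁ t ω)
    (hA₂mono : ∀ ω, Monotone fun t => A₂ t ω)
    (hA₁zero : ∀ ω, A₁ 0 ω = 0) (hA₂zero : ∀ ω, A₂ 0 ω = 0)
    (hA₁cont : ∀ ω, Continuous fun t => A₁ t ω)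
    (hA₁sup : (⨆ Q ∈ 𝒬, ∫⁻ ω, (⨆ t, ENNReal.ofReal (A₁ t ω)) ∂Q) < ⊤)
    (hMcont : ∀ ω, Continuous fun t => M t ω) (hMzero : ∀ ω, M 0 ω = 0)
    (hMsuper : ∀ Q ∈ 𝒬, Supermartingale M ℱ Q)
    (hZnonneg : ∀ t ω, 0 ≤ Z t ω)
    (hZ₀ : (⨆ Q ∈ 𝒬, ∫⁻ ω, ENNReal.ofReal (Z 0 ω) ∂Q) < ⊤)
    (hdecomp : ∀ t ω, Z t ω = Z 0 ω + A₁ t ω - A₂ t ω + M t ω) :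
    ∀ Q ∈ 𝒬, ∀ᵐ ω ∂Q,
      (∃ C : ℝ, ∀ t, A₂ t ω ≤ C) ∧
      (∃ L : ℝ, Tendsto (fun t => Z t ω) atTop (nhds L)) ∧
      (∃ L : ℝ, Tendsto (fun t => M t ω) atTop (nhds L)) := by
  intro Q hQ
  haveI : IsProbabilityMeasure Q := hprob Q hQ
  -- nonnegativity
  have hA1nn : ∀ t ω, 0 ≤ A₁ t ω := fun t ω => (hA₁zero ω) ▸ hA₁mono ω (zero_le : (0:ℝ≥0) ≤ t)
  have hA2nn : ∀ t ω, 0 ≤ A₂ t ω := fun t ω => (hA₂zero ω) ▸ hA₂mono ω (zero_le : (0:ℝ≥0) ≤ t)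
  -- measurability
  have measA1 : ∀ t, Measurable (A₁ t) := fun t => ((hA₁adapted t).mono (ℱ.le t) le_rfl)
  have measA2 : ∀ t, Measurable (A₂ t) := fun t => ((hA₂adapted t).mono (ℱ.le t) le_rfl)
  have measM : ∀ t, Measurable (M t) := fun t => ((hMadapted t).mono (ℱ.le t) le_rfl)
  have measZ : ∀ t, Measurable (Z t) := fun t => ((hZadapted t).mono (ℱ.le t) le_rfl)
  -- the dominating function for A₁
  set G₀ : Ω → ℝ≥0∞ := fun ω => ⨆ n : ℕ, ENNReal.ofReal (A₁ (n : ℝ≥0) ω) with hG₀def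
  have measG₀ : Measurable G₀ :=
    Measurable.iSup fun n => ENNReal.measurable_ofReal.comp (measA1 _)
  have hG₀le : ∀ t ω, ENNReal.ofReal (A₁ t ω) ≤ G₀ ω := by
    intro t ω
    obtain ⟨n, hn⟩ := exists_nat_ge t
    exact le_trans (ENNReal.ofReal_le_ofReal (hA₁mono ω hn))
      (le_iSup (fun n : ℕ => ENNReal.ofReal (A₁ (n : ℝ≥0) ω)) n)
  have hc1 : ∫⁻ ω, G₀ ω ∂Q < ⊤ := by
    refine lt_of_le_of_lt ?_ hA₁sup
    refine le_trans (lintegral_mono fun ω => ?_)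
      (le_iSup₂ (f := fun (Q : Measure Ω) (_ : Q ∈ 𝒬) =>
        ∫⁻ ω, (⨆ t, ENNReal.ofReal (A₁ t ω)) ∂Q) Q hQ)
    exact iSup_le fun n => le_iSup (fun t => ENNReal.ofReal (A₁ t ω)) (n : ℝ≥0)
  have hc0 : ∫⁻ ω, ENNReal.ofReal (Z 0 ω) ∂Q < ⊤ :=
    lt_of_le_of_lt (le_iSup₂ (f := fun (Q : Measure Ω) (_ : Q ∈ 𝒬) =>
      ∫⁻ ω, ENNReal.ofReal (Z 0 ω) ∂Q) Q hQ) hZ₀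
  -- integrability
  have intZ0 : Integrable (Z 0) Q := by
    refine ⟨(measZ 0).aestronglyMeasurable, ?_⟩
    rw [hasFiniteIntegral_iff_ofReal (Eventually.of_forall (hZnonneg 0))]
    exact hc0
  have intA1 : ∀ t, Integrable (A₁ t) Q := by
    intro t
    refine ⟨(measA1 t).aestronglyMeasurable, ?_⟩
    rw [hasFiniteIntegral_iff_ofReal (Eventually.of_forall (hA1nn t))]
    exact lt_of_le_of_lt (lintegral_mono fun ω => hG₀le t ω) hc1
  have intM : ∀ t, Integrable (M t) Q := fun t => (hMsuper Q hQ).integrable t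
  have intZ : ∀ t, Integrable (Z t) Q := by
    intro t
    refine Integrable.mono' ((intZ0.add (intA1 t)).add (intM t))
      (measZ t).aestronglyMeasurable (Eventually.of_forall fun ω => ?_)
    rw [Real.norm_eq_abs, abs_of_nonneg (hZnonneg t ω)]
    have h1 := hdecomp t ω
    have h2 := hA2nn t ω
    simp only [Pi.add_apply]
    linarith
  have intA2 : ∀ t, Integrable (A₂ t) Q := by
    intro t
    have hrw : A₂ t = fun ω => Z 0 ω + A₁ t ω + M t ω - Z t ω := by
      funext ω
      have := hdecomp t ω
      linarith
    rw [hrw]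
    exact ((intZ0.add (intA1 t)).add (intM t)).sub (intZ t)
  -- integral bounds
  have hMie : ∀ t, ∫ ω, M t ω ∂Q ≤ 0 := by
    intro t
    have h := (hMsuper Q hQ).setIntegral_le (zero_le : (0:ℝ≥0) ≤ t) (MeasurableSet.univ)
    rw [setIntegral_univ, setIntegral_univ] at h
    refine h.trans ?_
    rw [show (∫ ω, M 0 ω ∂Q) = ∫ (_ : Ω), (0:ℝ) ∂Q from integral_congr_ae
      (Eventually.of_forall fun ω => hMzero ω)]
    simp
  have hA1ie : ∀ t, ∫ ω, A₁ t ω ∂Q ≤ (∫⁻ ω, G₀ ω ∂Q).toReal := by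
    intro t
    rw [integral_eq_lintegral_of_nonneg_ae (Eventually.of_forall (hA1nn t))
      (measA1 t).aestronglyMeasurable]
    exact ENNReal.toReal_mono hc1.ne (lintegral_mono fun ω => hG₀le t ω)
  set r1 : ℝ := ∫ ω, Z 0 ω ∂Q + (∫⁻ ω, G₀ ω ∂Q).toReal with hr1def
  have hA2ie : ∀ t, ∫ ω, A₂ t ω ∂Q ≤ r1 := by
    intro t
    have hb : ∫ ω, A₂ t ω ∂Q ≤ ∫ ω, (Z 0 ω + A₁ t ω + M t ω) ∂Q := by
      refine integral_mono (intA2 t) ((intZ0.add (intA1 t)).add (intM t)) fun ω => ?_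
      have h1 := hdecomp t ω
      have h2 := hZnonneg t ω
      simp only [Pi.add_apply]
      linarith
    have i1 : Integrable (fun ω => Z 0 ω + A₁ t ω) Q := intZ0.add (intA1 t)
    rw [integral_add i1 (intM t), integral_add intZ0 (intA1 t)] at hb
    have h1 := hA1ie t
    have h2 := hMie t
    rw [hr1def]
    linarith
  -- the supremum of A₂ has finite integral
  set S2 : Ω → ℝ≥0∞ := fun ω => ⨆ n : ℕ, ENNReal.ofReal (A₂ (n : ℝ≥0) ω) with hS2def
  have measS2n : ∀ n : ℕ, Measurable fun ω => ENNReal.ofReal (A₂ (n : ℝ≥0) ω) :=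
    fun n => ENNReal.measurable_ofReal.comp (measA2 _)
  have hS2fin : ∫⁻ ω, S2 ω ∂Q < ⊤ := by
    rw [hS2def, lintegral_iSup measS2n (fun i j hij ω => ENNReal.ofReal_le_ofReal
      (hA₂mono ω (by exact_mod_cast hij)))]
    refine lt_of_le_of_lt (iSup_le fun n => ?_) (show ENNReal.ofReal r1 < ⊤ from
      ENNReal.ofReal_lt_top)
    rw [← ofReal_integral_eq_lintegral_ofReal (intA2 _) (Eventually.of_forall (hA2nn _))]
    exact ENNReal.ofReal_le_ofReal (hA2ie _)
  have aeS2 : ∀ᵐ ω ∂Q, S2 ω < ⊤ := ae_lt_top (Measurable.iSup measS2n) hS2fin.ne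
  have aeG₀ : ∀ᵐ ω ∂Q, G₀ ω < ⊤ := ae_lt_top measG₀ hc1.ne
  -- L¹ bound for |M|
  have hMabs : ∀ n : ℕ, ∫⁻ ω, ENNReal.ofReal |M (n : ℝ≥0) ω| ∂Q ≤ ENNReal.ofReal (2 * r1) := by
    intro n
    set t : ℝ≥0 := (n : ℝ≥0) with htdef
    have habs : ∀ ω, |M t ω| ≤ M t ω + 2 * (Z 0 ω + A₁ t ω) := by
      intro ω
      have h1 := hdecomp t ω
      have h2 := hZnonneg t ω
      have h3 := hA2nn t ω
      have h0 := hZnonneg 0 ω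
      have h4 := hA1nn t ω
      rcases abs_cases (M t ω) with ⟨he, _⟩ | ⟨he, _⟩ <;> rw [he] <;> linarith
    have i1 : Integrable (fun ω => Z 0 ω + A₁ t ω) Q := intZ0.add (intA1 t)
    have i3 : Integrable (fun ω => 2 * (Z 0 ω + A₁ t ω)) Q := i1.const_mul 2
    have hint : Integrable (fun ω => M t ω + 2 * (Z 0 ω + A₁ t ω)) Q := (intM t).add i3
    have h5 : ∫ ω, |M t ω| ∂Q ≤ ∫ ω, (M t ω + 2 * (Z 0 ω + A₁ t ω)) ∂Q :=
      integral_mono (intM t).abs hint habs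
    rw [integral_add (intM t) i3, integral_const_mul 2, integral_add intZ0 (intA1 t)] at h5
    rw [← ofReal_integral_eq_lintegral_ofReal (intM t).abs
      (Eventually.of_forall fun ω => abs_nonneg _)]
    refine ENNReal.ofReal_le_ofReal ?_
    have h6 := hMie t
    have h7 := hA1ie t
    rw [hr1def] at *
    linarith
  have measAbsM : ∀ n : ℕ, Measurable fun ω => ENNReal.ofReal |M (n : ℝ≥0) ω| := by
    intro n
    exact ENNReal.measurable_ofReal.comp ((measM _).max (measM _).neg)
  have aeMlim : ∀ᵐ ω ∂Q,
      liminf (fun n : ℕ => ENNReal.ofReal |M (n : ℝ≥0) ω|) atTop < ⊤ := by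
    refine ae_lt_top (Measurable.liminf measAbsM) ?_
    refine ne_of_lt (lt_of_le_of_lt (lintegral_liminf_le measAbsM) ?_)
    refine lt_of_le_of_lt ((liminf_le_liminf (Eventually.of_forall (hMabs))).trans_eq
      (liminf_const _)) ENNReal.ofReal_lt_top
  -- the discrete submartingales along dyadic grids
  have hsub : Submartingale (-M) ℱ Q := (hMsuper Q hQ).neg
  set dF : ℕ → Filtration ℕ m := fun mm =>
    ⟨fun kk => ℱ ((kk : ℝ≥0) / 2 ^ mm), fun i j hij => ℱ.mono (by gcongr <;> exact_mod_cast hij),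
      fun kk => ℱ.le _⟩ with hdFdef
  have hdsub : ∀ mm : ℕ, Submartingale (fun (kk : ℕ) => (-M) ((kk : ℝ≥0) / 2 ^ mm)) (dF mm) Q :=
    fun mm => ⟨fun kk => hsub.stronglyAdapted _,
      fun i j hij => hsub.2.1 _ _ (by gcongr <;> exact_mod_cast hij),
      fun kk => hsub.integrable _⟩
  have hup : ∀ (p q : ℚ), (p : ℝ) < (q : ℝ) → ∀ mm : ℕ,
      ∫⁻ ω, upcrossings (p : ℝ) (q : ℝ) (fun (kk : ℕ) => (-M) ((kk : ℝ≥0) / 2 ^ mm)) ω ∂Q ≤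
        (∫⁻ ω, ENNReal.ofReal (Z 0 ω) ∂Q + ∫⁻ ω, G₀ ω ∂Q + ENNReal.ofReal |(p : ℝ)|) /
          ENNReal.ofReal ((q : ℝ) - p) := by
    intro p q hpq mm
    have hkey := (hdsub mm).mul_lintegral_upcrossings_le_lintegral_pos_part (p : ℝ) (q : ℝ)
    have hbound : (⨆ N : ℕ, ∫⁻ ω,
        ENNReal.ofReal (((fun (kk : ℕ) => (-M) ((kk : ℝ≥0) / 2 ^ mm)) N ω - (p : ℝ))⁺) ∂Q) ≤
        ∫⁻ ω, ENNReal.ofReal (Z 0 ω) ∂Q + ∫⁻ ω, G₀ ω ∂Q + ENNReal.ofReal |(p : ℝ)| := by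
      refine iSup_le fun N => ?_
      have hpt : ∀ ω, ENNReal.ofReal ((((-M) ((N : ℝ≥0) / 2 ^ mm)) ω - (p : ℝ))⁺) ≤
          ENNReal.ofReal (Z 0 ω) + G₀ ω + ENNReal.ofReal |(p : ℝ)| := by
        intro ω
        set t' : ℝ≥0 := ((N : ℝ≥0) / 2 ^ mm) with ht'def
        have hM' : -M t' ω ≤ Z 0 ω + A₁ t' ω := by
          have h1 := hdecomp t' ω
          have h2 := hZnonneg t' ω
          have h3 := hA2nn t' ω
          linarith
        have h0 : (0 : ℝ) ≤ Z 0 ω + A₁ t' ω + |(p : ℝ)| := by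
          have := hZnonneg 0 ω
          have := hA1nn t' ω
          have := abs_nonneg (p : ℝ)
          linarith
        have h1 : (((-M) t' ω) - (p : ℝ))⁺ ≤ Z 0 ω + A₁ t' ω + |(p : ℝ)| := by
          refine sup_le ?_ h0
          have := neg_abs_le (p : ℝ)
          simp only [Pi.neg_apply]
          linarith
        calc ENNReal.ofReal ((((-M) t' ω) - (p : ℝ))⁺)
            ≤ ENNReal.ofReal (Z 0 ω + A₁ t' ω + |(p : ℝ)|) := ENNReal.ofReal_le_ofReal h1
          _ ≤ ENNReal.ofReal (Z 0 ω + A₁ t' ω) + ENNReal.ofReal |(p : ℝ)| :=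
              ENNReal.ofReal_add_le
          _ ≤ (ENNReal.ofReal (Z 0 ω) + ENNReal.ofReal (A₁ t' ω)) + ENNReal.ofReal |(p : ℝ)| :=
              add_le_add_left ENNReal.ofReal_add_le _
          _ ≤ (ENNReal.ofReal (Z 0 ω) + G₀ ω) + ENNReal.ofReal |(p : ℝ)| :=
              add_le_add_left (add_le_add_right (hG₀le t' ω) _) _
      calc (∫⁻ ω, ENNReal.ofReal (((fun (kk : ℕ) => (-M) ((kk : ℝ≥0) / 2 ^ mm)) N ω
              - (p : ℝ))⁺) ∂Q)
          ≤ ∫⁻ ω, (ENNReal.ofReal (Z 0 ω) + G₀ ω + ENNReal.ofReal |(p : ℝ)|) ∂Q :=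
            lintegral_mono fun ω => hpt ω
        _ = ∫⁻ ω, ENNReal.ofReal (Z 0 ω) ∂Q + ∫⁻ ω, G₀ ω ∂Q + ENNReal.ofReal |(p : ℝ)| := by
            rw [lintegral_add_right _ measurable_const,
              lintegral_add_right _ measG₀, lintegral_const, measure_univ, mul_one]
    have hne0 : ENNReal.ofReal ((q : ℝ) - p) ≠ 0 := by
      simp only [ne_eq, ENNReal.ofReal_eq_zero, not_le]
      linarith
    rw [mul_comm, ← ENNReal.le_div_iff_mul_le (Or.inl hne0) (Or.inl ENNReal.ofReal_ne_top)]
      at hkey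
    exact hkey.trans (ENNReal.div_le_div_right hbound _)
  have aeUp : ∀ᵐ ω ∂Q, ∀ p q : ℚ, (p : ℝ) < (q : ℝ) →
      liminf (fun mm : ℕ =>
        upcrossings (p : ℝ) (q : ℝ) (fun (kk : ℕ) => (-M) ((kk : ℝ≥0) / 2 ^ mm)) ω) atTop
        < ⊤ := by
    rw [ae_all_iff]
    intro p
    rw [ae_all_iff]
    intro q
    by_cases hpq : (p : ℝ) < (q : ℝ)
    · have hmeas : ∀ mm : ℕ, Measurable fun ω =>
          upcrossings (p : ℝ) (q : ℝ) (fun (kk : ℕ) => (-M) ((kk : ℝ≥0) / 2 ^ mm)) ω :=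
        fun mm => (hdsub mm).stronglyAdapted.measurable_upcrossings hpq
      have hfin : ∫⁻ ω, liminf (fun mm : ℕ =>
          upcrossings (p : ℝ) (q : ℝ) (fun (kk : ℕ) => (-M) ((kk : ℝ≥0) / 2 ^ mm)) ω) atTop ∂Q
          < ⊤ := by
        refine lt_of_le_of_lt (lintegral_liminf_le hmeas) ?_
        refine lt_of_le_of_lt ((liminf_le_liminf
          (Eventually.of_forall (hup p q hpq))).trans_eq (liminf_const _)) ?_
        have hne0' : ENNReal.ofReal ((q : ℝ) - p) ≠ 0 := by
          simp only [ne_eq, ENNReal.ofReal_eq_zero, not_le]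
          linarith
        exact ENNReal.div_lt_top (ENNReal.add_ne_top.2 ⟨ENNReal.add_ne_top.2
          ⟨hc0.ne, hc1.ne⟩, ENNReal.ofReal_ne_top⟩) hne0'
      filter_upwards [ae_lt_top (Measurable.liminf hmeas) hfin.ne] with ω h _
      exact h
    · filter_upwards with ω h
      exact absurd h hpq
  -- combine all a.e. statements and conclude pointwise
  filter_upwards [aeG₀, aeS2, aeMlim, aeUp] with ω hG hS hM3 hU
  have hA1b : ∀ t, A₁ t ω ≤ (G₀ ω).toReal := by
    intro t
    calc A₁ t ω = (ENNReal.ofReal (A₁ t ω)).toReal := (ENNReal.toReal_ofReal (hA1nn t ω)).symm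
      _ ≤ (G₀ ω).toReal := ENNReal.toReal_mono hG.ne (hG₀le t ω)
  have hA2b : ∀ t, A₂ t ω ≤ (S2 ω).toReal := by
    intro t
    obtain ⟨n, hn⟩ := exists_nat_ge t
    have h1 : ENNReal.ofReal (A₂ t ω) ≤ S2 ω :=
      le_trans (ENNReal.ofReal_le_ofReal (hA₂mono ω hn))
        (le_iSup (fun n : ℕ => ENNReal.ofReal (A₂ (n : ℝ≥0) ω)) n)
    calc A₂ t ω = (ENNReal.ofReal (A₂ t ω)).toReal := (ENNReal.toReal_ofReal (hA2nn t ω)).symm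
      _ ≤ (S2 ω).toReal := ENNReal.toReal_mono hS.ne h1
  have hMlb : ∀ t, -(Z 0 ω + (G₀ ω).toReal) ≤ M t ω := by
    intro t
    have h1 := hdecomp t ω
    have h2 := hZnonneg t ω
    have h3 := hA2nn t ω
    have h4 := hA1b t
    linarith
  -- the no-upcrossings property for the path of M
  have H : ∀ a ∈ Set.range ((↑) : ℚ → ℝ), ∀ b ∈ Set.range ((↑) : ℚ → ℝ), a < b →
      ¬((∃ᶠ t in atTop, M t ω < a) ∧ (∃ᶠ t in atTop, b < M t ω)) := by
    rintro x ⟨a', rfl⟩ y ⟨b', rfl⟩ hab ⟨hfa, hfb⟩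
    have hpq' : ((-b' : ℚ) : ℝ) < ((-a' : ℚ) : ℝ) := by push_cast; linarith
    have hf1 : ∃ᶠ t in atTop, (fun s ω' => -M s ω') t ω < ((-b' : ℚ) : ℝ) :=
      hfb.mono fun t ht => by show -M t ω < ((-b' : ℚ) : ℝ); push_cast; linarith
    have hf2 : ∃ᶠ t in atTop, ((-a' : ℚ) : ℝ) < (fun s ω' => -M s ω') t ω :=
      hfa.mono fun t ht => by show ((-a' : ℚ) : ℝ) < -M t ω; push_cast; linarith
    have hcont : Continuous fun t => (fun s ω' => -M s ω') t ω := (hMcont ω).neg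
    have hlim := hU (-b') (-a') hpq'
    obtain ⟨n, hn⟩ := ENNReal.exists_nat_gt hlim.ne
    obtain ⟨m₀, hm₀⟩ := aux_bridge (fun s ω' => -M s ω') ω hcont hpq' hf1 hf2 n
    have hged : ∀ᶠ mm : ℕ in atTop, (n : ℝ≥0∞) ≤ upcrossings ((-b' : ℚ) : ℝ) ((-a' : ℚ) : ℝ)
        (fun (kk : ℕ) => (-M) ((kk : ℝ≥0) / 2 ^ mm)) ω :=
      eventually_atTop.2 ⟨m₀, fun mm hmm => hm₀ mm hmm⟩
    exact absurd (le_liminf_of_le (by isBoundedDefault) hged) (not_le.2 hn)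
  -- boundedness of the path of M
  have hbddbelow : IsBoundedUnder (· ≥ ·) atTop (fun t => M t ω) :=
    ⟨-(Z 0 ω + (G₀ ω).toReal), eventually_map.2 (Eventually.of_forall hMlb)⟩
  have hbddabove : IsBoundedUnder (· ≤ ·) atTop (fun t => M t ω) := by
    by_contra hnb
    have hfb' : ∀ b : ℝ, ∃ᶠ t in atTop, b < M t ω := by
      intro b
      by_contra hcon
      rw [not_frequently] at hcon
      exact hnb ⟨b, eventually_map.2 (hcon.mono fun t ht => not_lt.1 ht)⟩
    have hfreq : ∃ᶠ n : ℕ in atTop, ENNReal.ofReal |M (n : ℝ≥0) ω| <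
        liminf (fun n : ℕ => ENNReal.ofReal |M (n : ℝ≥0) ω|) atTop + 1 :=
      frequently_lt_of_liminf_lt (by isBoundedDefault)
        (ENNReal.lt_add_right hM3.ne one_ne_zero)
    set cr : ℝ := (liminf (fun n : ℕ => ENNReal.ofReal |M (n : ℝ≥0) ω|) atTop + 1).toReal
      with hcrdef
    have hne : liminf (fun n : ℕ => ENNReal.ofReal |M (n : ℝ≥0) ω|) atTop + 1 ≠ ⊤ := by
      simp [hM3.ne]
    have hfreq' : ∃ᶠ n : ℕ in atTop, |M (n : ℝ≥0) ω| < cr := by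
      refine hfreq.mono fun n hn => ?_
      have h2 := (ENNReal.toReal_lt_toReal ENNReal.ofReal_ne_top hne).2 hn
      rwa [ENNReal.toReal_ofReal (abs_nonneg _)] at h2
    obtain ⟨a', ha'⟩ := exists_rat_gt cr
    have hfa : ∃ᶠ t in (atTop : Filter ℝ≥0), M t ω < (a' : ℝ) := by
      rw [frequently_atTop]
      intro T
      obtain ⟨n, hn1, hn2⟩ := frequently_atTop.1 hfreq' ⌈T⌉₊
      refine ⟨(n : ℝ≥0), le_trans (Nat.le_ceil T) (by exact_mod_cast hn1), ?_⟩
      calc M (n : ℝ≥0) ω ≤ |M (n : ℝ≥0) ω| := le_abs_self _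
        _ < cr := hn2
        _ < a' := ha'
    exact H (a' : ℝ) ⟨a', rfl⟩ ((a' + 1 : ℚ) : ℝ) ⟨a' + 1, rfl⟩ (by push_cast; linarith)
      ⟨hfa, hfb' _⟩
  obtain ⟨LM, hLM⟩ := tendsto_of_no_upcrossings Rat.denseRange_cast H hbddabove hbddbelow
  have hA1tend : Tendsto (fun t => A₁ t ω) atTop (nhds (⨆ t, A₁ t ω)) :=
    tendsto_atTop_ciSup (hA₁mono ω) ⟨(G₀ ω).toReal, by rintro xx ⟨t, rfl⟩; exact hA1b t⟩
  have hA2tend : Tendsto (fun t => A₂ t ω) atTop (nhds (⨆ t, A₂ t ω)) :=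
    tendsto_atTop_ciSup (hA₂mono ω) ⟨(S2 ω).toReal, by rintro xx ⟨t, rfl⟩; exact hA2b t⟩
  refine ⟨⟨(S2 ω).toReal, hA2b⟩,
    ⟨Z 0 ω + (⨆ t, A₁ t ω) - (⨆ t, A₂ t ω) + LM, ?_⟩, ⟨LM, hLM⟩⟩
  have hcomb := (((tendsto_const_nhds (x := Z 0 ω)).add hA1tend).sub hA2tend).add hLM
  exact Tendsto.congr (fun t => (hdecomp t ω).symm) hcomb
end

section
/- Let g : [0,∞) → ℝ be right-continuous (or left-continuous), let n be a positive integer, let α < β be real numbers, and let ε > 0 satisfy α + ε < β − ε. Then the upcrossing numbers satisfy U_{[0,n]}(α, β; g) ≤ U_{[0,n]∩ℚ}(α + ε, β − ε; g). -/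
open MeasureTheory Filter
open scoped NNReal ENNReal

/-- The first time in `F` at or after `lb` at which the predicate `P` holds
(`⊤ = +∞` if there is none). -/
noncomputable def nextTime (F : Set ℝ≥0) (P : ℝ≥0 → Prop) (lb : ℝ≥0∞) : ℝ≥0∞ :=
  sInf ((fun t : ℝ≥0 => (t : ℝ≥0∞)) '' {t | t ∈ F ∧ lb ≤ (t : ℝ≥0∞) ∧ P t})

/-- The pair `(τ_{j+1}, σ_{j+1})` of the paper's recursively defined crossing times:
`τ₁ = min{t ∈ F : g(t) ≤ α}`, `σ_j = min{t ∈ F : t ≥ τ_j, g(t) ≥ β}`,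
`τ_{j+1} = min{t ∈ F : t ≥ σ_j, g(t) ≤ α}` (with `min ∅ = +∞`). -/
noncomputable def crossingTimes (F : Set ℝ≥0) (α β : ℝ) (g : ℝ≥0 → ℝ) : ℕ → ℝ≥0∞ × ℝ≥0∞
  | 0 =>
      let τ := nextTime F (fun t => g t ≤ α) 0
      (τ, nextTime F (fun t => β ≤ g t) τ)
  | n + 1 =>
      let τ := nextTime F (fun t => g t ≤ α) (crossingTimes F α β g n).2
      (τ, nextTime F (fun t => β ≤ g t) τ)

/-- `U_F(α, β; g)`: the largest `j` such that `σ_j < +∞` (and `0` if there is none). -/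
noncomputable def upcrossingCount (F : Set ℝ≥0) (α β : ℝ) (g : ℝ≥0 → ℝ) : ℕ∞ :=
  ⨆ j ∈ {j : ℕ | (crossingTimes F α β g j).2 < ⊤}, ((j : ℕ∞) + 1)

/-- `U_I(α, β; g) = sup{U_F(α, β; g) : F ⊆ I finite}`. -/
noncomputable def upcrossingNum (I : Set ℝ≥0) (α β : ℝ) (g : ℝ≥0 → ℝ) : ℕ∞ :=
  ⨆ (F : Finset ℝ≥0) (_ : (F : Set ℝ≥0) ⊆ I), upcrossingCount (F : Set ℝ≥0) α β g

lemma nextTime_le {F : Set ℝ≥0} {P : ℝ≥0 → Prop} {lb : ℝ≥0∞} {t : ℝ≥0}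
    (ht : t ∈ F) (hlb : lb ≤ (t : ℝ≥0∞)) (hP : P t) : nextTime F P lb ≤ t :=
  sInf_le ⟨t, ⟨ht, hlb, hP⟩, rfl⟩

lemma nextTime_spec {F : Finset ℝ≥0} {P : ℝ≥0 → Prop} {lb : ℝ≥0∞}
    (h : nextTime (F : Set ℝ≥0) P lb < ⊤) :
    ∃ t, t ∈ F ∧ lb ≤ (t : ℝ≥0∞) ∧ P t ∧ nextTime (F : Set ℝ≥0) P lb = (t : ℝ≥0∞) := by
  set S := (fun t : ℝ≥0 => (t : ℝ≥0∞)) '' {t | t ∈ (F : Set ℝ≥0) ∧ lb ≤ (t : ℝ≥0∞) ∧ P t}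
    with hS
  have hne : S.Nonempty := by
    by_contra hemp
    rw [Set.not_nonempty_iff_eq_empty] at hemp
    rw [nextTime, ← hS, hemp, sInf_empty] at h
    exact absurd h (lt_irrefl _)
  have hfin : S.Finite := (F.finite_toSet.subset (fun t ht => ht.1)).image _
  have hmem : sInf S ∈ S := hne.csInf_mem hfin
  obtain ⟨t, ⟨htF, hlb, hP⟩, hEq⟩ := hmem
  exact ⟨t, htF, hlb, hP, by rw [nextTime, ← hS, ← hEq]⟩

lemma crossing_mono (F F' : Finset ℝ≥0) (α β α' β' : ℝ) (g : ℝ≥0 → ℝ) (φ : ℝ≥0 → ℝ≥0)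
    (hφF : ∀ t ∈ F, φ t ∈ F')
    (hmono : ∀ s ∈ F, ∀ t ∈ F, s ≤ t → φ s ≤ φ t)
    (hα : ∀ t ∈ F, g t ≤ α → g (φ t) ≤ α')
    (hβ : ∀ t ∈ F, β ≤ g t → β' ≤ g (φ t)) :
    ∀ j, (crossingTimes (F : Set ℝ≥0) α β g j).2 < ⊤ →
      ∃ s ∈ F, (crossingTimes (F : Set ℝ≥0) α β g j).2 = (s : ℝ≥0∞) ∧
        (crossingTimes (F' : Set ℝ≥0) α' β' g j).2 ≤ (φ s : ℝ≥0∞) := by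
  intro j
  induction j with
  | zero =>
    intro h
    simp only [crossingTimes] at h ⊢
    obtain ⟨s, hsF, hτs, hβs, hσ⟩ := nextTime_spec h
    have hτlt : nextTime (F : Set ℝ≥0) (fun t => g t ≤ α) 0 < ⊤ :=
      lt_of_le_of_lt hτs ENNReal.coe_lt_top
    obtain ⟨t, htF, -, hαt, hτ⟩ := nextTime_spec hτlt
    have hts : t ≤ s := by rw [hτ] at hτs; exact_mod_cast hτs
    have h1 : nextTime (F' : Set ℝ≥0) (fun u => g u ≤ α') 0 ≤ (φ t : ℝ≥0∞) :=
      nextTime_le (hφF t htF) zero_le (hα t htF hαt)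
    refine ⟨s, hsF, hσ, nextTime_le (hφF s hsF) ?_ (hβ s hsF hβs)⟩
    exact h1.trans (by exact_mod_cast hmono t htF s hsF hts)
  | succ j ih =>
    intro h
    simp only [crossingTimes] at h ⊢
    obtain ⟨s, hsF, hτs, hβs, hσ⟩ := nextTime_spec h
    have hτlt : nextTime (F : Set ℝ≥0) (fun t => g t ≤ α)
        (crossingTimes (F : Set ℝ≥0) α β g j).2 < ⊤ :=
      lt_of_le_of_lt hτs ENNReal.coe_lt_top
    obtain ⟨t, htF, hσt, hαt, hτ⟩ := nextTime_spec hτlt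
    have hσjlt : (crossingTimes (F : Set ℝ≥0) α β g j).2 < ⊤ :=
      lt_of_le_of_lt hσt ENNReal.coe_lt_top
    obtain ⟨r, hrF, hσjr, hle⟩ := ih hσjlt
    have hrt : r ≤ t := by rw [hσjr] at hσt; exact_mod_cast hσt
    have hts : t ≤ s := by rw [hτ] at hτs; exact_mod_cast hτs
    have h1 : nextTime (F' : Set ℝ≥0) (fun u => g u ≤ α')
        (crossingTimes (F' : Set ℝ≥0) α' β' g j).2 ≤ (φ t : ℝ≥0∞) :=
      nextTime_le (hφF t htF)
        (hle.trans (by exact_mod_cast hmono r hrF t htF hrt)) (hα t htF hαt)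
    refine ⟨s, hsF, hσ, nextTime_le (hφF s hsF) ?_ (hβ s hsF hβs)⟩
    exact h1.trans (by exact_mod_cast hmono t htF s hsF hts)

lemma count_le_num (F : Finset ℝ≥0) (I : Set ℝ≥0) (α β α' β' : ℝ) (g : ℝ≥0 → ℝ)
    (φ : ℝ≥0 → ℝ≥0)
    (hφI : ∀ t ∈ F, φ t ∈ I)
    (hmono : ∀ s ∈ F, ∀ t ∈ F, s ≤ t → φ s ≤ φ t)
    (hα : ∀ t ∈ F, g t ≤ α → g (φ t) ≤ α')
    (hβ : ∀ t ∈ F, β ≤ g t → β' ≤ g (φ t)) :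
    upcrossingCount (F : Set ℝ≥0) α β g ≤
      (⨆ (G : Finset ℝ≥0) (_ : (G : Set ℝ≥0) ⊆ I), upcrossingCount (G : Set ℝ≥0) α' β' g) := by
  have hφF : ∀ t ∈ F, φ t ∈ F.image φ := fun t ht => Finset.mem_image_of_mem φ ht
  have step : upcrossingCount (F : Set ℝ≥0) α β g ≤
      upcrossingCount ((F.image φ : Finset ℝ≥0) : Set ℝ≥0) α' β' g := by
    refine iSup₂_le fun j hj => ?_
    obtain ⟨s, hs, -, hle⟩ :=
      crossing_mono F (F.image φ) α β α' β' g φ hφF hmono hα hβ j hj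
    exact le_iSup₂_of_le j (lt_of_le_of_lt hle ENNReal.coe_lt_top) le_rfl
  refine step.trans ?_
  refine le_iSup₂_of_le (F.image φ) ?_ le_rfl
  intro x hx
  rw [Finset.coe_image] at hx
  obtain ⟨t, ht, rfl⟩ := hx
  exact hφI t ht

/-- For a right- or left-continuous function `g`, the upcrossing number of `[α, β]` over
`[0, n]` is bounded by the upcrossing number of the slightly smaller band
`[α + ε, β − ε]` over the rational points of `[0, n]`. -/
theorem upcrossing_rational_approximation
    (g : ℝ≥0 → ℝ)
    (hcont : (∀ t, ContinuousWithinAt g (Set.Ici t) t) ∨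
             (∀ t, ContinuousWithinAt g (Set.Iic t) t))
    (n : ℕ) (hn : 0 < n) (α β ε : ℝ) (hαβ : α < β) (hε : 0 < ε)
    (hband : α + ε < β - ε) :
    upcrossingNum (Set.Icc 0 (n : ℝ≥0)) α β g ≤
      upcrossingNum (Set.Icc 0 (n : ℝ≥0) ∩ {t : ℝ≥0 | ∃ q : ℚ, (t : ℝ) = (q : ℝ)})
        (α + ε) (β - ε) g := by
  rw [upcrossingNum, upcrossingNum]
  refine iSup₂_le fun F hF => ?_
  rcases hcont with hc | hc
  · -- right-continuous
    have key : ∀ t : ℝ≥0, ∃ q : ℝ≥0, t ∈ F →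
        t ≤ q ∧ (∀ s ∈ F, t < s → q < s) ∧ q ≤ (n : ℝ≥0) ∧
        (∃ r : ℚ, (q : ℝ) = (r : ℝ)) ∧ |g q - g t| ≤ ε := by
      intro t
      by_cases htF : t ∈ F
      · have htn : t ≤ (n : ℝ≥0) := (hF htF).2
        -- gap to next element of F
        have hδ' : ∃ δ' : ℝ, 0 < δ' ∧ ∀ s ∈ F, t < s → (t : ℝ) + δ' ≤ (s : ℝ) := by
          set G := F.filter (fun s => t < s) with hG
          rcases G.eq_empty_or_nonempty with hGe | hGne
          · refine ⟨1, one_pos, fun s hs hts => ?_⟩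
            exact absurd (hG ▸ Finset.mem_filter.mpr ⟨hs, hts⟩) (by simp [hGe])
          · refine ⟨(G.min' hGne : ℝ) - (t : ℝ), ?_, ?_⟩
            · have h1 : t < G.min' hGne := (Finset.mem_filter.mp (G.min'_mem hGne)).2
              have : (t : ℝ) < (G.min' hGne : ℝ) := by exact_mod_cast h1
              linarith
            · intro s hs hts
              have h1 : G.min' hGne ≤ s := G.min'_le s (Finset.mem_filter.mpr ⟨hs, hts⟩)
              have : (G.min' hGne : ℝ) ≤ (s : ℝ) := by exact_mod_cast h1
              linarith
        obtain ⟨δ', hδ'pos, hδ'⟩ := hδ'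
        rcases eq_or_lt_of_le htn with hteq | htlt
        · -- t = n : take q = t (it is rational)
          refine ⟨t, fun _ => ⟨le_rfl, ?_, htn, ⟨(n : ℚ), by rw [hteq]; push_cast; ring⟩, ?_⟩⟩
          · intro s hs hts
            exact absurd ((hteq ▸ hts).trans_le (hF hs).2) (lt_irrefl _)
          · simp [abs_of_nonneg, hε.le]
        · -- t < n
          obtain ⟨δ, hδpos, hδ⟩ := Metric.continuousWithinAt_iff.mp (hc t) ε hε
          have htc : (t : ℝ) < min ((n : ℝ≥0) : ℝ) (min ((t : ℝ) + δ) ((t : ℝ) + δ')) := by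
            refine lt_min (by exact_mod_cast htlt) (lt_min (by linarith) (by linarith))
          obtain ⟨r, hr1, hr2⟩ := exists_rat_btwn htc
          have hr0 : (0 : ℝ) ≤ (r : ℝ) := le_trans t.coe_nonneg hr1.le
          refine ⟨Real.toNNReal (r : ℝ), fun _ => ?_⟩
          have hqr : ((Real.toNNReal (r : ℝ) : ℝ≥0) : ℝ) = (r : ℝ) := Real.coe_toNNReal _ hr0
          have hq1 : t ≤ Real.toNNReal (r : ℝ) := by
            rw [← NNReal.coe_le_coe, hqr]; exact hr1.le
          have hr2n : (r : ℝ) < ((n : ℝ≥0) : ℝ) := hr2.trans_le (min_le_left _ _)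
          have hr2δ : (r : ℝ) < (t : ℝ) + δ :=
            hr2.trans_le ((min_le_right _ _).trans (min_le_left _ _))
          have hr2δ' : (r : ℝ) < (t : ℝ) + δ' :=
            hr2.trans_le ((min_le_right _ _).trans (min_le_right _ _))
          refine ⟨hq1, ?_, ?_, ⟨r, hqr⟩, ?_⟩
          · intro s hs hts
            rw [← NNReal.coe_lt_coe, hqr]
            exact hr2δ'.trans_le (hδ' s hs hts)
          · rw [← NNReal.coe_le_coe, hqr]; exact hr2n.le
          · have hmem : Real.toNNReal (r : ℝ) ∈ Set.Ici t := hq1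
            have hdist : dist (Real.toNNReal (r : ℝ)) t < δ := by
              rw [NNReal.dist_eq, hqr, abs_of_nonneg (by linarith : (0:ℝ) ≤ (r : ℝ) - t)]
              linarith
            have := hδ hmem hdist
            rw [Real.dist_eq] at this
            exact this.le
      · exact ⟨t, fun h => absurd h htF⟩
    choose φ hφ using key
    refine count_le_num F _ α β (α + ε) (β - ε) g φ ?_ ?_ ?_ ?_
    · intro t ht
      obtain ⟨-, -, hn', hrat, -⟩ := hφ t ht
      exact ⟨⟨zero_le, hn'⟩, hrat⟩
    · intro s hs t ht hst
      rcases eq_or_lt_of_le hst with rfl | hlt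
      · exact le_rfl
      · have h1 : φ s < t := (hφ s hs).2.1 t ht hlt
        exact h1.le.trans (hφ t ht).1
    · intro t ht hgt
      have h1 := (hφ t ht).2.2.2.2
      have := (abs_sub_le_iff.mp h1).1
      linarith
    · intro t ht hgt
      have h1 := (hφ t ht).2.2.2.2
      have := (abs_sub_le_iff.mp h1).2
      linarith
  · -- left-continuous
    have key : ∀ t : ℝ≥0, ∃ q : ℝ≥0, t ∈ F →
        q ≤ t ∧ (∀ s ∈ F, s < t → s < q) ∧ q ≤ (n : ℝ≥0) ∧
        (∃ r : ℚ, (q : ℝ) = (r : ℝ)) ∧ |g q - g t| ≤ ε := by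
      intro t
      by_cases htF : t ∈ F
      · have htn : t ≤ (n : ℝ≥0) := (hF htF).2
        rcases eq_or_lt_of_le (zero_le : 0 ≤ t) with hteq | htpos
        · -- t = 0 : take q = 0
          refine ⟨0, fun _ => ⟨zero_le, ?_, zero_le, ⟨(0 : ℚ), by push_cast; ring⟩, ?_⟩⟩
          · intro s hs hst
            rw [← hteq] at hst
            exact absurd hst (by simp)
          · rw [← hteq]; simp [hε.le]
        · -- 0 < t
          have hδ' : ∃ δ' : ℝ, 0 < δ' ∧ ∀ s ∈ F, s < t → (s : ℝ) ≤ (t : ℝ) - δ' := by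
            set G := F.filter (fun s => s < t) with hG
            rcases G.eq_empty_or_nonempty with hGe | hGne
            · refine ⟨1, one_pos, fun s hs hst => ?_⟩
              have hmem : s ∈ G := by rw [hG]; exact Finset.mem_filter.mpr ⟨hs, hst⟩
              rw [hGe] at hmem
              exact absurd hmem (Finset.notMem_empty s)
            · refine ⟨(t : ℝ) - (G.max' hGne : ℝ), ?_, ?_⟩
              · have h1 : G.max' hGne < t := (Finset.mem_filter.mp (G.max'_mem hGne)).2
                have : (G.max' hGne : ℝ) < (t : ℝ) := by exact_mod_cast h1
                linarith
              · intro s hs hst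
                have h1 : s ≤ G.max' hGne := G.le_max' s (Finset.mem_filter.mpr ⟨hs, hst⟩)
                have : (s : ℝ) ≤ (G.max' hGne : ℝ) := by exact_mod_cast h1
                linarith
          obtain ⟨δ', hδ'pos, hδ'⟩ := hδ'
          obtain ⟨δ, hδpos, hδ⟩ := Metric.continuousWithinAt_iff.mp (hc t) ε hε
          have htpos' : (0 : ℝ) < (t : ℝ) := by exact_mod_cast htpos
          have hLt : max (max ((t : ℝ) - δ) ((t : ℝ) - δ')) 0 < (t : ℝ) := by
            refine max_lt (max_lt (by linarith) (by linarith)) htpos'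
          obtain ⟨r, hr1, hr2⟩ := exists_rat_btwn hLt
          have hr0 : (0 : ℝ) ≤ (r : ℝ) := le_trans (le_max_right _ _) hr1.le
          have hqr : ((Real.toNNReal (r : ℝ) : ℝ≥0) : ℝ) = (r : ℝ) := Real.coe_toNNReal _ hr0
          have hrδ : (t : ℝ) - δ < (r : ℝ) := lt_of_le_of_lt ((le_max_left _ _).trans (le_max_left _ _)) hr1
          have hrδ' : (t : ℝ) - δ' < (r : ℝ) := lt_of_le_of_lt ((le_max_right _ _).trans (le_max_left _ _)) hr1
          refine ⟨Real.toNNReal (r : ℝ), fun _ => ?_⟩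
          have hq1 : Real.toNNReal (r : ℝ) ≤ t := by
            rw [← NNReal.coe_le_coe, hqr]; exact hr2.le
          refine ⟨hq1, ?_, hq1.trans htn, ⟨r, hqr⟩, ?_⟩
          · intro s hs hst
            rw [← NNReal.coe_lt_coe, hqr]
            exact lt_of_le_of_lt (hδ' s hs hst) hrδ'
          · have hmem : Real.toNNReal (r : ℝ) ∈ Set.Iic t := hq1
            have hdist : dist (Real.toNNReal (r : ℝ)) t < δ := by
              rw [NNReal.dist_eq, hqr, abs_of_nonpos (by linarith : (r : ℝ) - (t : ℝ) ≤ 0)]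
              linarith
            have := hδ hmem hdist
            rw [Real.dist_eq] at this
            exact this.le
      · exact ⟨t, fun h => absurd h htF⟩
    choose φ hφ using key
    refine count_le_num F _ α β (α + ε) (β - ε) g φ ?_ ?_ ?_ ?_
    · intro t ht
      obtain ⟨-, -, hn', hrat, -⟩ := hφ t ht
      exact ⟨⟨zero_le, hn'⟩, hrat⟩
    · intro s hs t ht hst
      rcases eq_or_lt_of_le hst with rfl | hlt
      · exact le_rfl
      · have h1 : s < φ t := (hφ t ht).2.1 s hs hlt
        exact ((hφ s hs).1.trans h1.le)
    · intro t ht hgt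
      have h1 := (hφ t ht).2.2.2.2
      have := (abs_sub_le_iff.mp h1).1
      linarith
    · intro t ht hgt
      have h1 := (hφ t ht).2.2.2.2
      have := (abs_sub_le_iff.mp h1).2
      linarith
end

section
/- Let A₁ and A₂ be the real 3×3 matrices A₁ = [[1, 0.5, 0], [0, 1, 0], [0, 0, 1]] and A₂ = [[1, 0, 0], [0, 1, 0.5], [0, 0, 1]]. Then for every x ∈ ℝ³ and for j = 1, 2: (xᵀA_j x)² ≥ (1/2)·|x|²·|A_j x|² + (1/8)·|x|⁴ and xᵀA_j x ≤ (5/4)·|x|², where |·| denotes the Euclidean norm. -/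
open Matrix

lemma quad_est (a b c : ℝ) :
    ((a^2+b^2+c^2) + a*b/2)^2 ≥
      (1/2)*(a^2+b^2+c^2)*((a+b/2)^2+b^2+c^2) + (1/8)*(a^2+b^2+c^2)^2 ∧
    (a^2+b^2+c^2) + a*b/2 ≤ (5/4)*(a^2+b^2+c^2) := by
  constructor
  · nlinarith [sq_nonneg (a*b/2 + (a^2+b^2+c^2)/2), sq_nonneg a, sq_nonneg c,
      mul_nonneg (add_nonneg (sq_nonneg a) (sq_nonneg c)) (add_nonneg (add_nonneg (sq_nonneg a) (sq_nonneg b)) (sq_nonneg c))]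
  · nlinarith [sq_nonneg (a-b), sq_nonneg c]

/-- The quadratic-form estimates for the diffusion matrices `A₁`, `A₂` of Example 5.3:
`(xᵀA_j x)² ≥ (1/2)|x|²|A_j x|² + (1/8)|x|⁴` and `xᵀA_j x ≤ (5/4)|x|²`. -/
theorem example_5_3_quadratic_form_estimates
    (A₁ A₂ : Matrix (Fin 3) (Fin 3) ℝ)
    (hA₁ : A₁ = !![1, 0.5, 0; 0, 1, 0; 0, 0, 1])
    (hA₂ : A₂ = !![1, 0, 0; 0, 1, 0.5; 0, 0, 1]) :
    ∀ x : Fin 3 → ℝ, ∀ A ∈ ({A₁, A₂} : Set (Matrix (Fin 3) (Fin 3) ℝ)),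
      (x ⬝ᵥ A.mulVec x) ^ 2 ≥
          (1 / 2) * (x ⬝ᵥ x) * (A.mulVec x ⬝ᵥ A.mulVec x) + (1 / 8) * (x ⬝ᵥ x) ^ 2 ∧
        x ⬝ᵥ A.mulVec x ≤ (5 / 4) * (x ⬝ᵥ x) := by
  intro x A hA
  rcases hA with rfl | rfl <;> subst hA₁ <;> try subst hA₂
  · have := quad_est (x 0) (x 1) (x 2)
    simp [dotProduct, mulVec, Fin.sum_univ_three, Matrix.cons_val_zero, Matrix.cons_val_one,
      Matrix.head_cons, Matrix.cons_val_two, Matrix.tail_cons, Matrix.vecHead, Matrix.vecTail, Function.comp]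
    norm_num
    constructor <;> nlinarith [this.1, this.2]
  · have := quad_est (x 1) (x 2) (x 0)
    simp [dotProduct, mulVec, Fin.sum_univ_three, Matrix.cons_val_zero, Matrix.cons_val_one,
      Matrix.head_cons, Matrix.cons_val_two, Matrix.tail_cons, Matrix.vecHead, Matrix.vecTail, Function.comp]
    norm_num
    constructor <;> nlinarith [this.1, this.2]
end
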